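/- Let R be a commutative ℚ-algebra and Y a smooth R-scheme, with de Rham stack Y_dR defined on R-algebras by Y_dR(B) := Y(B^red), where B^red is the quotient of B by its nilradical. Then for every B ∈ DG⁺CAlg(R), (D_*Y_dR)(B) = Y((B⁰)^red). Moreover, for Y affine, the natural maps H⁰B → B⁰ → (B⁰)^red induce natural transformations D_*Y → Spec Ω•_{Y/R} → D_*Y_dR of functors on DG⁺CAlg(R). -/

import Mathlib

open CategoryTheory

universe u

/-- A commutative differential graded algebra over `R` concentrated in non-negative
cochain degrees: a (not-necessarily-commutative) `R`-algebra with an `ℕ`-grading making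
it a graded ring, which is graded-commutative (Koszul signs), together with a square-zero
`R`-linear derivation `d` of cochain degree `+1`.  This is an object of `DG⁺CAlg(R)`. -/
structure DGCAlg (R : Type u) [CommRing R] : Type (u + 1) where
  carrier : Type u
  [ring : Ring carrier]
  [algebra : Algebra R carrier]
  grading : ℕ → Submodule R carrier
  [graded : GradedRing grading]
  gcomm : ∀ (i j : ℕ) (a b : carrier), a ∈ grading i → b ∈ grading j →
    a * b = ((-1 : ℤ) ^ (i * j)) • (b * a)
  d : carrier →ₗ[R] carrier
  d_mem : ∀ (i : ℕ) (a : carrier), a ∈ grading i → d a ∈ grading (i + 1)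
  d_d : ∀ a, d (d a) = 0
  leibniz : ∀ (i : ℕ) (a b : carrier), a ∈ grading i →
    d (a * b) = d a * b + ((-1 : ℤ) ^ i) • (a * d b)

attribute [instance] DGCAlg.ring DGCAlg.algebra DGCAlg.graded

variable {R : Type u} [CommRing R]

/-- Morphisms of non-negatively graded CDGAs: `R`-algebra homomorphisms preserving the
grading and commuting with the differentials. -/
@[ext]
structure DGCAlg.Hom (A B : DGCAlg R) where
  toAlgHom : A.carrier →ₐ[R] B.carrier
  map_grading : ∀ (i : ℕ) (a : A.carrier), a ∈ A.grading i → toAlgHom a ∈ B.grading i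
  map_d : ∀ a, toAlgHom (A.d a) = B.d (toAlgHom a)

instance : Category (DGCAlg R) where
  Hom A B := DGCAlg.Hom A B
  id A := ⟨AlgHom.id R A.carrier, fun _ _ h => h, fun _ => rfl⟩
  comp f g := ⟨g.toAlgHom.comp f.toAlgHom,
    fun i a h => g.map_grading i _ (f.map_grading i a h),
    fun a => by simp [AlgHom.comp_apply, f.map_d, g.map_d]⟩
  id_comp f := by apply DGCAlg.Hom.ext; rfl
  comp_id f := by apply DGCAlg.Hom.ext; rfl
  assoc f g h := by apply DGCAlg.Hom.ext; rfl

namespace DGCAlg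

/-- A morphism of CDGAs is a square-zero extension if it is surjective in every
(cochain) level and its kernel is a square-zero ideal. -/
def Hom.IsSquareZeroExtension {C' C : DGCAlg R} (p : DGCAlg.Hom C' C) : Prop :=
  (∀ i : ℕ, ∀ b ∈ C.grading i, ∃ a ∈ C'.grading i, p.toAlgHom a = b) ∧
    ∀ x y : C'.carrier, p.toAlgHom x = 0 → p.toAlgHom y = 0 → x * y = 0

/-- A square-zero extension is contractible if its kernel admits a `C'`-linear
contracting (cochain) homotopy. -/
def Hom.IsContractibleSquareZeroExtension {C' C : DGCAlg R} (p : DGCAlg.Hom C' C) : Prop :=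
  p.IsSquareZeroExtension ∧
    ∃ h : C'.carrier →ₗ[R] C'.carrier,
      (∀ x, p.toAlgHom x = 0 → p.toAlgHom (h x) = 0) ∧
      (∀ (i : ℕ) x, p.toAlgHom x = 0 → x ∈ C'.grading (i + 1) → h x ∈ C'.grading i) ∧
      (∀ x, p.toAlgHom x = 0 → x ∈ C'.grading 0 → h x = 0) ∧
      (∀ (i : ℕ) (a x : C'.carrier), a ∈ C'.grading i → p.toAlgHom x = 0 →
        h (a * x) = ((-1 : ℤ) ^ i) • (a * h x)) ∧
      (∀ x, p.toAlgHom x = 0 → C'.d (h x) + h (C'.d x) = x)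

end DGCAlg

/-- A natural transformation of set-valued functors on `DG⁺CAlg(R)` is formally étale if
it satisfies the (surjective) lifting condition against all square-zero extensions. -/
def FormallyEtaleNT {F G : DGCAlg R ⥤ Type u} (η : F ⟶ G) : Prop :=
  ∀ (C' C : DGCAlg R) (p : C' ⟶ C), DGCAlg.Hom.IsSquareZeroExtension p →
    ∀ (x : F.obj C) (y : G.obj C'), η.app C x = G.map p y →
      ∃ x' : F.obj C', F.map p x' = x ∧ η.app C' x' = y

/-- A natural transformation of set-valued functors on `DG⁺CAlg(R)` is formally geometric
if it satisfies the lifting condition against all contractible square-zero extensions. -/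
def FormallyGeometricNT {F G : DGCAlg R ⥤ Type u} (η : F ⟶ G) : Prop :=
  ∀ (C' C : DGCAlg R) (p : C' ⟶ C), DGCAlg.Hom.IsContractibleSquareZeroExtension p →
    ∀ (x : F.obj C) (y : G.obj C'), η.app C x = G.map p y →
      ∃ x' : F.obj C', F.map p x' = x ∧ η.app C' x' = y

/-- A natural transformation `η : F ⟶ G` of set-valued functors on `DG⁺CAlg(R)` is l.f.p.
if for every filtered colimit `C = colim_i C_i` the natural comparison map
`colim_i F(C_i) → colim_i G(C_i) ×_{G(C)} F(C)` is a bijection. -/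
def LFPNT {F G : DGCAlg R ⥤ Type u} (η : F ⟶ G) : Prop :=
  ∀ (I : Type u) (_ : SmallCategory I) (_ : IsFiltered I) (K : I ⥤ DGCAlg R)
    (c : Limits.Cocone K) (_ : Limits.IsColimit c),
    (∀ x y : Limits.colimit (K ⋙ F),
      Limits.colimMap (Functor.whiskerLeft K η) x = Limits.colimMap (Functor.whiskerLeft K η) y →
      Limits.colimit.desc (K ⋙ F) (F.mapCocone c) x =
        Limits.colimit.desc (K ⋙ F) (F.mapCocone c) y → x = y) ∧
    ∀ (yc : Limits.colimit (K ⋙ G)) (xF : F.obj c.pt),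
      Limits.colimit.desc (K ⋙ G) (G.mapCocone c) yc = η.app c.pt xF →
        ∃ x : Limits.colimit (K ⋙ F),
          Limits.colimMap (Functor.whiskerLeft K η) x = yc ∧
          Limits.colimit.desc (K ⋙ F) (F.mapCocone c) x = xF

/-- Étale natural transformations: formally étale and l.f.p. -/
def EtaleNT {F G : DGCAlg R ⥤ Type u} (η : F ⟶ G) : Prop :=
  FormallyEtaleNT η ∧ LFPNT η

/-- Geometric natural transformations: formally geometric and l.f.p. -/
def GeometricNT {F G : DGCAlg R ⥤ Type u} (η : F ⟶ G) : Prop :=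
  FormallyGeometricNT η ∧ LFPNT η

/-- The set-valued functor `Spec A` on `DG⁺CAlg(R)` represented by `A`. -/
def DGCAlg.Spec (A : DGCAlg R) : DGCAlg R ⥤ Type u := coyoneda.obj (Opposite.op A)

/-- The map `Spec B ⟶ Spec A` induced by a CDGA morphism `f : A ⟶ B`. -/
def DGCAlg.specMap {A B : DGCAlg R} (f : A ⟶ B) : B.Spec ⟶ A.Spec :=
  coyoneda.map f.op

/-- The unique natural transformation to the terminal (constant singleton) functor. -/
def toTerminalNT (F : DGCAlg R ⥤ Type u) : F ⟶ (Functor.const (DGCAlg R)).obj PUnit where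
  app _ := TypeCat.ofHom (fun _ => PUnit.unit)

/-- `Spec A` is a stacky affine if the map to the point is geometric. -/
def DGCAlg.IsStackyAffine (A : DGCAlg R) : Prop :=
  GeometricNT (toTerminalNT A.Spec)

/-- A morphism of CDGAs is étale if the induced map on `Spec` functors is étale. -/
def DGCAlg.Hom.IsEtale {A B : DGCAlg R} (f : A ⟶ B) : Prop := EtaleNT (DGCAlg.specMap f)

/-- A morphism of CDGAs is geometric if the induced map on `Spec` functors is geometric. -/
def DGCAlg.Hom.IsGeometric {A B : DGCAlg R} (f : A ⟶ B) : Prop :=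
  GeometricNT (DGCAlg.specMap f)

/-- The degree-zero part of a CDGA, as a commutative ring. -/
instance DGCAlg.commRingGradeZero (A : DGCAlg R) : CommRing (A.grading 0) :=
  { (inferInstance : Ring (A.grading 0)) with
    mul_comm := fun a b => Subtype.ext <| by
      have := A.gcomm 0 0 a.1 b.1 a.2 b.2
      simpa using this }

/-! ### The de Rham algebra `Ω•_{Y/R}` as an object of `DG⁺CAlg(R)` -/

/-- A realisation of the de Rham algebra `Ω•_{Y/R}` of a commutative `R`-algebra `Y` as
an object of `DG⁺CAlg(R)`: the underlying graded algebra is the exterior algebra over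
`Y` on the Kähler differentials `Ω[Y⁄R]` (identified via `lift`), the degree-zero part
is `Y`, and the differential restricts to the universal derivation `y ↦ d y` in degree
zero (which pins down the de Rham differential in all degrees, by the Leibniz rule). -/
structure DeRhamData (R : Type u) [CommRing R] (Y : Type u) [CommRing Y]
    [Algebra R Y] where
  Ω : DGCAlg R
  ι : Y →ₐ[R] Ω.carrier
  ι_mem : ∀ y, ι y ∈ Ω.grading 0
  lift : ExteriorAlgebra Y (Ω[Y⁄R]) →+* Ω.carrier
  lift_alg : ∀ y : Y, lift (algebraMap Y (ExteriorAlgebra Y (Ω[Y⁄R])) y) = ι y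
  lift_d : ∀ y : Y,
    lift (ExteriorAlgebra.ι Y (KaehlerDifferential.D R Y y)) = Ω.d (ι y)
  lift_bijective : Function.Bijective lift
  lift_graded : ∀ (n : ℕ), ∀ x ∈ ⋀[Y]^n (Ω[Y⁄R]), lift x ∈ Ω.grading n
  lift_graded_onto : ∀ (n : ℕ), ∀ z ∈ Ω.grading n, ∃ x ∈ ⋀[Y]^n (Ω[Y⁄R]), lift x = z

/-! ### Dold–Kan denormalisation and the Eilenberg–Zilber shuffle product -/

section Denorm

variable (A : DGCAlg R)

/-- The underlying `R`-module of the `n`-th level `DⁿA` of the denormalisation of `A`: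
`DⁿA = ⊕_{J ⊆ {1,…,n}} ∂^J A^{n-|J|}`, encoded as functions on subsets `J` of `Fin n`
(the subset `J` encodes the coface operators `∂^{j+1}` for `j ∈ J`). -/
def DObj (n : ℕ) : Type u := ∀ J : Finset (Fin n), A.grading (n - J.card)

instance (n : ℕ) : AddCommGroup (DObj A n) :=
  inferInstanceAs (AddCommGroup (∀ J : Finset (Fin n), A.grading (n - J.card)))
instance (n : ℕ) : Module R (DObj A n) :=
  inferInstanceAs (Module R (∀ J : Finset (Fin n), A.grading (n - J.card)))

/-- The basis inclusion of the summand `∂^J A^{n-|J|}` of `DⁿA`. -/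
def DObj.single {n : ℕ} (J : Finset (Fin n)) (a : A.grading (n - J.card)) : DObj A n :=
  Pi.single J a

variable {A}

/-- The sign `(-1)^{(S,T)}` of the shuffle permutation of `S ⊔ T` sending the first `|S|`
elements to `S` in order and the remaining `|T|` elements to `T` in order: `(-1)` to the
number of pairs `(s,t) ∈ S × T` with `t < s`. -/
def shuffleSign {n : ℕ} (S T : Finset (Fin n)) : ℤ :=
  (-1 : ℤ) ^ ((S ×ˢ T).filter (fun p => p.2 < p.1)).card

lemma grade_arith {n : ℕ} {I J : Finset (Fin n)} (h : I ∪ J = Finset.univ) :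
    (n - I.card) + (n - J.card) = n - (I ∩ J).card := by
  have h1 : I.card ≤ n := by simpa using Finset.card_le_univ I
  have h2 : J.card ≤ n := by simpa using Finset.card_le_univ J
  have h4 : (I ∩ J).card ≤ J.card := Finset.card_le_card Finset.inter_subset_right
  have h3 : n + (I ∩ J).card = I.card + J.card := by
    have := Finset.card_union_add_card_inter I J
    rw [h] at this
    simpa using this
  omega

lemma mul_mem_grade {n : ℕ} {I J : Finset (Fin n)} (h : I ∪ J = Finset.univ)
    {a b : A.carrier} (ha : a ∈ A.grading (n - I.card)) (hb : b ∈ A.grading (n - J.card)) :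
    a * b ∈ A.grading (n - (I ∩ J).card) :=
  grade_arith h ▸ SetLike.GradedMul.mul_mem ha hb

/-- The set `{j} ∪ δ_j(J)`, describing the effect of the coface operator `∂^{j+1}` on the
basis summand indexed by `J`. -/
def insertFace {n : ℕ} (j : Fin (n + 1)) (J : Finset (Fin n)) : Finset (Fin (n + 1)) :=
  insert j (J.image j.succAbove)

lemma insertFace_card {n : ℕ} (j : Fin (n + 1)) (J : Finset (Fin n)) :
    (insertFace j J).card = J.card + 1 := by
  have hj : j ∉ J.image j.succAbove := by
    simp only [Finset.mem_image]
    rintro ⟨a, -, ha⟩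
    exact Fin.succAbove_ne j a ha
  rw [insertFace, Finset.card_insert_of_notMem hj,
    Finset.card_image_of_injective _ Fin.succAbove_right_injective]

lemma insertFace_grade {n : ℕ} (j : Fin (n + 1)) (J : Finset (Fin n)) {v : A.carrier}
    (hv : v ∈ A.grading (n - J.card)) :
    v ∈ A.grading ((n + 1) - (insertFace j J).card) := by
  rwa [insertFace_card, Nat.succ_sub_succ]

variable (A)

/-- The structure of a cosimplicial commutative `R`-algebra on the Dold–Kan
denormalisation `n ↦ DⁿA` of `A ∈ DG⁺CAlg(R)`:
* a commutative `R`-algebra structure on each `DⁿA`, whose multiplication is given on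
  the canonical basis by the Eilenberg–Zilber shuffle-product formula
  `(∂^I a) ∇ (∂^J b) = ∂^{I∩J} (-1)^{(J∖I, I∖J)} (a·b)` if `I ∪ J = {1,…,n}`
  (equivalently `|a| = |J∖I|` and `|b| = |I∖J|`), and `0` otherwise;
* a functorial cosimplicial structure, all of whose operators are `R`-algebra
  homomorphisms, determined by the requirements that `σⁱ v = 0` for `v ∈ Aⁿ ⊆ DⁿA`,
  that `∂⁰ v = ∂v - Σ_{i=1}^{n+1} (-1)ⁱ ∂ⁱ v` for `v ∈ Aⁿ ⊆ DⁿA` (stated below as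
  `Σ_{i=0}^{n+1} (-1)ⁱ ∂ⁱ v = ∂v`), and that the coface operators with positive index
  act on the basis in the canonical way. -/
structure DenormalisationData : Type u where
  mul : ∀ n, DObj A n → DObj A n → DObj A n
  one : ∀ n, DObj A n
  mul_comm' : ∀ n x y, mul n x y = mul n y x
  mul_assoc' : ∀ n x y z, mul n (mul n x y) z = mul n x (mul n y z)
  one_mul' : ∀ n x, mul n (one n) x = x
  mul_add' : ∀ n x y z, mul n x (y + z) = mul n x y + mul n x z
  mul_smul' : ∀ n (r : R) x y, mul n x (r • y) = r • mul n x y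
  one_def : ∀ n, one n = DObj.single A Finset.univ
    ⟨1, by simpa using SetLike.one_mem_graded A.grading⟩
  mul_single : ∀ (n : ℕ) (I J : Finset (Fin n)) (a : A.grading (n - I.card))
    (b : A.grading (n - J.card)),
    mul n (DObj.single A I a) (DObj.single A J b) =
      if h : I ∪ J = Finset.univ then
        shuffleSign (J \ I) (I \ J) •
          DObj.single A (I ∩ J) ⟨(a : A.carrier) * b, mul_mem_grade h a.2 b.2⟩
      else 0
  map : ∀ {m n : SimplexCategory}, (m ⟶ n) → (DObj A m.len →ₗ[R] DObj A n.len)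
  map_id : ∀ m : SimplexCategory, map (𝟙 m) = LinearMap.id
  map_comp : ∀ {m n k : SimplexCategory} (f : m ⟶ n) (g : n ⟶ k),
    map (f ≫ g) = (map g).comp (map f)
  map_mul : ∀ {m n : SimplexCategory} (f : m ⟶ n) (x y : DObj A m.len),
    map f (mul m.len x y) = mul n.len (map f x) (map f y)
  map_one : ∀ {m n : SimplexCategory} (f : m ⟶ n), map f (one m.len) = one n.len
  σ_incl : ∀ (n : ℕ) (i : Fin (n + 1)) (v : A.grading (n + 1)),
    map (SimplexCategory.σ i) (DObj.single A (∅ : Finset (Fin (n + 1))) v) = 0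
  δ_incl : ∀ (n : ℕ) (j : Fin (n + 2)) (hj : j ≠ 0) (J : Finset (Fin n))
    (v : A.grading (n - J.card)),
    map (SimplexCategory.δ j) (DObj.single A J v) =
      DObj.single A (insertFace (j.pred hj) J) ⟨v, insertFace_grade _ J v.2⟩
  δ_alternating : ∀ (n : ℕ) (v : A.grading n),
    ∑ i : Fin (n + 2), ((-1 : ℤ) ^ (i : ℕ)) •
        map (SimplexCategory.δ i) (DObj.single A (∅ : Finset (Fin n)) v) =
      DObj.single A (∅ : Finset (Fin (n + 1))) ⟨A.d v, A.d_mem n v v.2⟩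

end Denorm

/-! ### The levels of the denormalisation as commutative `R`-algebras -/

namespace DenormalisationData

variable {R : Type u} [CommRing R] {A : DGCAlg R} (D : DenormalisationData A)

/-- The commutative ring structure on `DⁿA` provided by the shuffle product. -/
def commRingDObj (n : ℕ) : CommRing (DObj A n) :=
  { (inferInstance : AddCommGroup (DObj A n)) with
    mul := D.mul n
    one := D.one n
    left_distrib := fun x y z => D.mul_add' n x y z
    right_distrib := fun x y z => by
      show D.mul n (x + y) z = D.mul n x z + D.mul n y z
      rw [D.mul_comm' n _ z, D.mul_add' n z x y, D.mul_comm' n z x, D.mul_comm' n z y]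
    mul_assoc := D.mul_assoc' n
    one_mul := D.one_mul' n
    mul_one := fun x => by
      show D.mul n x (D.one n) = x
      rw [D.mul_comm']; exact D.one_mul' n x
    mul_comm := D.mul_comm' n
    mul_zero := fun x => by
      show D.mul n x 0 = 0
      have h := D.mul_add' n x 0 0
      rw [add_zero] at h
      exact left_eq_add.mp h
    zero_mul := fun x => by
      show D.mul n 0 x = 0
      rw [D.mul_comm' n 0 x]
      have h := D.mul_add' n x 0 0
      rw [add_zero] at h
      exact left_eq_add.mp h }

/-- The `R`-algebra structure on `DⁿA`. -/
def algebraDObj (n : ℕ) :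
    letI := D.commRingDObj n
    Algebra R (DObj A n) :=
  letI := D.commRingDObj n
  @Algebra.ofModule R (DObj A n) _ _
    (inferInstanceAs (Module R (∀ J : Finset (Fin n), A.grading (n - J.card))))
    (fun r x y => by
      show D.mul n (r • x) y = r • D.mul n x y
      rw [D.mul_comm' n _ y, D.mul_smul' n r y x, D.mul_comm' n y x])
    (fun r x y => by
      show D.mul n x (r • y) = r • D.mul n x y
      exact D.mul_smul' n r x y)

/-- The cosimplicial operators as ring homomorphisms. -/
def mapRingHom {m k : SimplexCategory} (f : m ⟶ k) :
    letI := D.commRingDObj m.len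
    letI := D.commRingDObj k.len
    DObj A m.len →+* DObj A k.len :=
  letI := D.commRingDObj m.len
  letI := D.commRingDObj k.len
  { toFun := D.map f
    map_one' := D.map_one f
    map_mul' := D.map_mul f
    map_zero' := (D.map f).map_zero
    map_add' := (D.map f).map_add }

end DenormalisationData

namespace DenormalisationData

variable {R : Type u} [CommRing R] {B : DGCAlg R} (D : DenormalisationData B)

/-- The `n`-th level `DⁿB` of the denormalisation, as a commutative `R`-algebra. -/
def DLevel (_D : DenormalisationData B) (n : ℕ) : Type u := DObj B n

instance (n : ℕ) : CommRing (D.DLevel n) := D.commRingDObj n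
instance (n : ℕ) : Algebra R (D.DLevel n) := D.algebraDObj n

/-- The cosimplicial operators on the levels of the denormalisation. -/
def mapHom {m k : SimplexCategory} (f : m ⟶ k) : D.DLevel m.len →+* D.DLevel k.len :=
  D.mapRingHom f

/-- The reduction `(DⁿB)^red` of the `n`-th level of the denormalisation. -/
def redLevel (n : ℕ) : Type u := D.DLevel n ⧸ nilradical (D.DLevel n)

instance (n : ℕ) : CommRing (D.redLevel n) :=
  inferInstanceAs (CommRing (D.DLevel n ⧸ nilradical (D.DLevel n)))
instance (n : ℕ) : Algebra R (D.redLevel n) :=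
  inferInstanceAs (Algebra R (D.DLevel n ⧸ nilradical (D.DLevel n)))

/-- The reduction of the coface operator `∂ⁱ : D⁰B → D¹B`. -/
def redDelta (i : Fin 2) : D.redLevel 0 →+* D.redLevel 1 :=
  Ideal.quotientMap (nilradical (D.DLevel 1)) (D.mapHom (SimplexCategory.δ i))
    (fun x hx => Ideal.mem_comap.mpr
      (mem_nilradical.mpr ((mem_nilradical.mp hx).map (D.mapHom (SimplexCategory.δ i)))))

end DenormalisationData


/-! The two coface maps `D⁰B ⇉ D¹B` differ by `x ↦ d x ∈ B¹ ⊆ D¹B`, and the summand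
`B¹ ⊆ D¹B` squares to zero under the shuffle product; so `∂⁰` and `∂¹` agree after reduction.
A point `y : O(Y) → D⁰B = B⁰` equalised by the cofaces therefore satisfies `d ∘ y = 0`, and it
extends to `Ω•_{Y/R} → B` by sending every form of positive degree to `0`: this is a map of
CDGAs since `d ∘ y = 0`, and it is the only extension because `Ω•_{Y/R}` is generated as an
algebra by `f` and `d f` for `f ∈ O(Y)`. -/

namespace DObj

variable {A : DGCAlg R}

lemma coe_single_apply {n : ℕ} (J K : Finset (Fin n)) (a : A.grading (n - J.card)) :
    ((DObj.single A J a K : A.grading (n - K.card)) : A.carrier) =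
      if J = K then (a : A.carrier) else 0 := by
  rcases eq_or_ne J K with rfl | h
  · rw [if_pos rfl, DObj.single, Pi.single_eq_same]
  · rw [if_neg h, DObj.single, Pi.single_eq_of_ne (Ne.symm h)]
    rfl

lemma eq_single_empty (x : DObj A 0) : x = DObj.single A ∅ (x ∅) := by
  funext J
  obtain rfl : J = ∅ := Finset.eq_empty_of_isEmpty J
  rw [DObj.single, Pi.single_eq_same]

end DObj

namespace DenormalisationData

variable {B : DGCAlg R} (D : DenormalisationData B)

lemma mul_apply_empty (x y : D.DLevel 0) :
    ((x * y) ∅ : B.carrier) = (x ∅ : B.carrier) * (y ∅ : B.carrier) := by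
  conv_lhs => rw [show x * y = D.mul 0 x y from rfl, DObj.eq_single_empty x,
    DObj.eq_single_empty y]
  rw [D.mul_single 0 ∅ ∅ (x ∅) (y ∅), dif_pos (by decide),
    show shuffleSign (∅ \ ∅ : Finset (Fin 0)) (∅ \ ∅) = 1 by decide, one_smul,
    DObj.coe_single_apply, if_pos (by decide)]

lemma one_apply_empty : ((1 : D.DLevel 0) ∅ : B.carrier) = 1 := by
  show ((D.one 0) ∅ : B.carrier) = 1
  rw [D.one_def, DObj.coe_single_apply, if_pos (by decide)]

/-- The identification `D⁰B = B⁰`, as an algebra map into `B`. -/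
def evalEmpty : D.DLevel 0 →ₐ[R] B.carrier where
  toFun x := (x ∅ : B.carrier)
  map_one' := D.one_apply_empty
  map_mul' := D.mul_apply_empty
  map_zero' := rfl
  map_add' _ _ := rfl
  commutes' r := by
    calc ((algebraMap R (D.DLevel 0) r) ∅ : B.carrier)
        = r • ((1 : D.DLevel 0) ∅ : B.carrier) := by
          rw [Algebra.algebraMap_eq_smul_one]; rfl
      _ = algebraMap R B.carrier r := by
          rw [D.one_apply_empty, Algebra.algebraMap_eq_smul_one]

lemma evalEmpty_mem (x : D.DLevel 0) : D.evalEmpty x ∈ B.grading 0 :=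
  (x ∅).2

lemma delta_zero_sub_delta_one (x : D.DLevel 0) :
    D.mapHom (SimplexCategory.δ 0) x - D.mapHom (SimplexCategory.δ 1) x =
      DObj.single B (∅ : Finset (Fin 1)) ⟨B.d (x ∅), B.d_mem 0 (x ∅) (x ∅).2⟩ := by
  have h := D.δ_alternating 0 (x ∅)
  rw [Fin.sum_univ_two] at h
  simp only [Fin.val_zero, Fin.val_one, pow_zero, pow_one, one_smul, neg_smul] at h
  show D.map (SimplexCategory.δ 0) x - D.map (SimplexCategory.δ 1) x = _
  conv_lhs => rw [DObj.eq_single_empty x]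
  rw [sub_eq_add_neg]
  exact h

lemma mul_single_empty_self (w : B.grading (1 - (∅ : Finset (Fin 1)).card)) :
    D.mul 1 (DObj.single B ∅ w) (DObj.single B ∅ w) = 0 := by
  rw [D.mul_single 1 ∅ ∅ w w, dif_neg (by decide)]

lemma redDelta_zero_eq_redDelta_one : D.redDelta 0 = D.redDelta 1 := by
  ext q
  obtain ⟨x, rfl⟩ := Ideal.Quotient.mk_surjective q
  show Ideal.quotientMap _ _ _ _ = Ideal.quotientMap _ _ _ _
  rw [Ideal.quotientMap_mk, Ideal.quotientMap_mk, Ideal.Quotient.mk_eq_mk_iff_sub_mem]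
  show D.mapHom (SimplexCategory.δ 0) x - D.mapHom (SimplexCategory.δ 1) x ∈ _
  rw [D.delta_zero_sub_delta_one x]
  exact mem_nilradical.mpr ⟨2, (pow_two _).trans (D.mul_single_empty_self _)⟩

lemma d_evalEmpty_eq_zero_of_delta_eq (x : D.DLevel 0)
    (hx : D.mapHom (SimplexCategory.δ 0) x = D.mapHom (SimplexCategory.δ 1) x) :
    B.d (D.evalEmpty x) = 0 := by
  have h := congrFun (D.delta_zero_sub_delta_one x) ∅
  rw [hx, sub_self, DObj.single, Pi.single_eq_same] at h
  exact (Subtype.ext_iff.mp h).symm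

end DenormalisationData

namespace ExteriorAlgebra

variable {S M : Type*} [CommRing S] [AddCommGroup M] [Module S M]

lemma algebraMapInv_eq_zero_of_mem_exteriorPower {n : ℕ} (hn : n ≠ 0)
    {x : ExteriorAlgebra S M} (hx : x ∈ ⋀[S]^n M) : algebraMapInv x = 0 := by
  obtain ⟨m, rfl⟩ := Nat.exists_eq_succ_of_ne_zero hn
  rw [← ιMulti_span_fixedDegree] at hx
  induction hx using Submodule.span_induction with
  | mem u hu =>
    obtain ⟨v, rfl⟩ := hu
    rw [ιMulti_succ_apply, map_mul]
    simp [algebraMapInv]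
  | zero => rw [map_zero]
  | add u w _ _ ihu ihw => rw [map_add, ihu, ihw, add_zero]
  | smul a u _ ih => rw [map_smul, ih, smul_zero]

end ExteriorAlgebra

namespace DeRhamData

variable {OY : Type u} [CommRing OY] [Algebra R OY] (DR : DeRhamData R OY)

/-- The projection `Ω•_{Y/R} → Ω⁰_{Y/R} = O(Y)` killing all forms of positive degree. -/
noncomputable def proj : DR.Ω.carrier →+* OY :=
  ExteriorAlgebra.algebraMapInv.toRingHom.comp
    (RingEquiv.ofBijective DR.lift DR.lift_bijective).symm.toRingHom

lemma proj_lift (x : ExteriorAlgebra OY (Ω[OY⁄R])) :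
    DR.proj (DR.lift x) = ExteriorAlgebra.algebraMapInv x := by
  show ExteriorAlgebra.algebraMapInv ((RingEquiv.ofBijective DR.lift DR.lift_bijective).symm
    (RingEquiv.ofBijective DR.lift DR.lift_bijective x)) = _
  rw [RingEquiv.symm_apply_apply]

lemma proj_ι (f : OY) : DR.proj (DR.ι f) = f := by
  rw [← DR.lift_alg, proj_lift]
  exact ExteriorAlgebra.algebraMap_leftInverse _ f

lemma proj_eq_zero_of_mem_grading {n : ℕ} (hn : n ≠ 0) {a : DR.Ω.carrier}
    (ha : a ∈ DR.Ω.grading n) : DR.proj a = 0 := by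
  obtain ⟨x, hx, rfl⟩ := DR.lift_graded_onto n a ha
  rw [proj_lift]
  exact ExteriorAlgebra.algebraMapInv_eq_zero_of_mem_exteriorPower hn hx

lemma proj_d (a : DR.Ω.carrier) : DR.proj (DR.Ω.d a) = 0 := by
  induction a using DirectSum.Decomposition.inductionOn DR.Ω.grading with
  | zero => rw [map_zero, map_zero]
  | homogeneous m =>
    exact DR.proj_eq_zero_of_mem_grading (Nat.succ_ne_zero _) (DR.Ω.d_mem _ _ m.2)
  | add u w hu hw => rw [map_add, map_add, hu, hw, add_zero]

variable {B : DGCAlg R}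

noncomputable def homOfDegreeZero (g : OY →ₐ[R] B.carrier) (hg : ∀ f, g f ∈ B.grading 0)
    (hd : ∀ f, B.d (g f) = 0) : DR.Ω ⟶ B where
  toAlgHom :=
    { g.toRingHom.comp DR.proj with
      commutes' := fun r => by
        show g (DR.proj (algebraMap R DR.Ω.carrier r)) = _
        rw [← DR.ι.commutes, proj_ι, g.commutes] }
  map_grading i a ha := by
    show g (DR.proj a) ∈ _
    rcases eq_or_ne i 0 with rfl | hi
    · exact hg _
    · rw [DR.proj_eq_zero_of_mem_grading hi ha, map_zero]
      exact zero_mem _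
  map_d a := by
    show g (DR.proj _) = B.d (g (DR.proj a))
    rw [proj_d, map_zero, hd]

lemma homOfDegreeZero_ι (g : OY →ₐ[R] B.carrier) (hg : ∀ f, g f ∈ B.grading 0)
    (hd : ∀ f, B.d (g f) = 0) (f : OY) :
    (DR.homOfDegreeZero g hg hd).toAlgHom (DR.ι f) = g f :=
  congrArg g (DR.proj_ι f)

lemma hom_ext {φ₁ φ₂ : DR.Ω ⟶ B}
    (h : ∀ f : OY, φ₁.toAlgHom (DR.ι f) = φ₂.toAlgHom (DR.ι f)) : φ₁ = φ₂ := by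
  have h_d (f : OY) : φ₁.toAlgHom (DR.Ω.d (DR.ι f)) = φ₂.toAlgHom (DR.Ω.d (DR.ι f)) := by
    rw [φ₁.map_d, φ₂.map_d, h f]
  refine DGCAlg.Hom.ext (AlgHom.ext fun a => ?_)
  obtain ⟨x, rfl⟩ := DR.lift_bijective.surjective a
  induction x using ExteriorAlgebra.induction with
  | algebraMap f => rw [DR.lift_alg]; exact h f
  | ι m =>
    have hm : m ∈ Submodule.span OY (Set.range (KaehlerDifferential.D R OY)) := by
      rw [KaehlerDifferential.span_range_derivation]; exact Submodule.mem_top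
    induction hm using Submodule.span_induction with
    | mem w hw =>
      obtain ⟨f, rfl⟩ := hw
      rw [DR.lift_d]; exact h_d f
    | zero => simp only [map_zero]
    | add u w _ _ ihu ihw => rw [map_add, map_add, map_add, map_add, ihu, ihw]
    | smul c w _ ih =>
      rw [map_smul, Algebra.smul_def, map_mul, map_mul, map_mul, DR.lift_alg, h c, ih]
  | mul u w ihu ihw => rw [map_mul, map_mul, map_mul, ihu, ihw]
  | add u w ihu ihw => rw [map_add, map_add, map_add, ihu, ihw]

def degreeZeroHom (φ : DR.Ω ⟶ B) : OY →ₐ[R] B.grading 0 where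
  toFun f := ⟨φ.toAlgHom (DR.ι f), φ.map_grading 0 _ (DR.ι_mem f)⟩
  map_one' := Subtype.ext (by simp)
  map_mul' _ _ := Subtype.ext (by simp)
  map_zero' := Subtype.ext (by simp)
  map_add' _ _ := Subtype.ext (by simp)
  commutes' r := Subtype.ext (by
    show φ.toAlgHom (DR.ι (algebraMap R OY r)) = _
    rw [DR.ι.commutes, φ.toAlgHom.commutes]
    rfl)

end DeRhamData

open AlgebraicGeometry in
theorem deRhamStack_denormalisation_general
    {R : Type u} [CommRing R]
    (Y : Scheme.{u}) (sY : Y ⟶ Spec (CommRingCat.of R))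
    (OY : Type u) [CommRing OY] [Algebra R OY]
    (DR : DeRhamData R OY)
    (B : DGCAlg R) (D : DenormalisationData B) :
    (∀ g : Spec (CommRingCat.of (D.redLevel 0)) ⟶ Y,
      g ≫ sY = Spec.map (CommRingCat.ofHom (algebraMap R (D.redLevel 0))) →
        Spec.map (CommRingCat.ofHom (D.redDelta 0)) ≫ g =
          Spec.map (CommRingCat.ofHom (D.redDelta 1)) ≫ g) ∧
    (∀ y : OY →ₐ[R] D.DLevel 0,
      (∀ f : OY, D.mapHom (SimplexCategory.δ 0) (y f) =
        D.mapHom (SimplexCategory.δ 1) (y f)) →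
      ∃! φ : DR.Ω ⟶ B, ∀ f : OY,
        φ.toAlgHom (DR.ι f) = ((y f) (∅ : Finset (Fin 0)) : B.carrier)) ∧
    (∀ φ : DR.Ω ⟶ B,
      ∃! ψ : OY →ₐ[R] (B.grading 0 ⧸ nilradical (B.grading 0)),
        ∀ f : OY, ψ f = Ideal.Quotient.mk (nilradical (B.grading 0))
          ⟨φ.toAlgHom (DR.ι f), φ.map_grading 0 _ (DR.ι_mem f)⟩) := by
  refine ⟨fun g _ => by rw [D.redDelta_zero_eq_redDelta_one], fun y hy => ?_, fun φ => ?_⟩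
  · let g := D.evalEmpty.comp y
    have hg (f : OY) : g f ∈ B.grading 0 := D.evalEmpty_mem (y f)
    have hd (f : OY) : B.d (g f) = 0 := D.d_evalEmpty_eq_zero_of_delta_eq (y f) (hy f)
    refine ⟨DR.homOfDegreeZero g hg hd, DR.homOfDegreeZero_ι g hg hd, fun ψ hψ => ?_⟩
    exact DR.hom_ext fun f => (hψ f).trans (DR.homOfDegreeZero_ι g hg hd f).symm
  · exact ⟨(Ideal.Quotient.mkₐ R _).comp (DR.degreeZeroHom φ), fun _ => rfl,
      fun ψ hψ => AlgHom.ext hψ⟩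

open AlgebraicGeometry in
/-- **(Example: the de Rham stack and the de Rham algebra.)**
Let `Y` be a smooth `R`-scheme, with de Rham stack `Y_dR(B) := Y(B^red)`.  Then for
every `B ∈ DG⁺CAlg(R)`: `(D_*Y_dR)(B) = Y((B⁰)^red)`, i.e. the two coface maps
`Y_dR(∂⁰), Y_dR(∂¹) : Y_dR(D⁰B) ⇉ Y_dR(D¹B)` coincide, so the equaliser computing
`(D_*Y_dR)(B)` is all of `Y((D⁰B)^red) = Y((B⁰)^red)` (first conjunct).  Moreover, for
`Y = Spec O(Y)` affine, the natural maps `H⁰B → B⁰ → (B⁰)^red` induce natural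
transformations `D_*Y → Spec Ω•_{Y/R} → D_*Y_dR` (second and third conjuncts: each
point of `(D_*Y)(B)` induces a unique point of `(Spec Ω•_{Y/R})(B)`, and each point of
`(Spec Ω•_{Y/R})(B)` induces a point of `(D_*Y_dR)(B)`). -/
theorem deRhamStack_denormalisation
    {R : Type u} [CommRing R] [Algebra ℚ R]
    (Y : Scheme.{u}) (sY : Y ⟶ Spec (CommRingCat.of R)) (_ : IsSmooth sY)
    (OY : Type u) [CommRing OY] [Algebra R OY] [Algebra.Smooth R OY]
    (DR : DeRhamData R OY)
    (B : DGCAlg R) (D : DenormalisationData B) :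
    (∀ g : Spec (CommRingCat.of (D.redLevel 0)) ⟶ Y,
      g ≫ sY = Spec.map (CommRingCat.ofHom (algebraMap R (D.redLevel 0))) →
        Spec.map (CommRingCat.ofHom (D.redDelta 0)) ≫ g =
          Spec.map (CommRingCat.ofHom (D.redDelta 1)) ≫ g) ∧
    (∀ y : OY →ₐ[R] D.DLevel 0,
      (∀ f : OY, D.mapHom (SimplexCategory.δ 0) (y f) =
        D.mapHom (SimplexCategory.δ 1) (y f)) →
      ∃! φ : DR.Ω ⟶ B, ∀ f : OY,
        φ.toAlgHom (DR.ι f) = ((y f) (∅ : Finset (Fin 0)) : B.carrier)) ∧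
    (∀ φ : DR.Ω ⟶ B,
      ∃! ψ : OY →ₐ[R] (B.grading 0 ⧸ nilradical (B.grading 0)),
        ∀ f : OY, ψ f = Ideal.Quotient.mk (nilradical (B.grading 0))
          ⟨φ.toAlgHom (DR.ι f), φ.map_grading 0 _ (DR.ι_mem f)⟩) :=
  deRhamStack_denormalisation_general Y sY OY DR B D
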